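/- arXiv:1905.09919 — 9 statements merged into one kernel-verified Lean document; each statement's English description precedes it below -/
import Mathlib

section
/- Let X be a finite ground set and f : 2^X → ℝ a monotone nondecreasing set function whose marginal gains f_j(S) = f(S ∪ {j}) − f(S) are strictly positive for every S ⊂ X and j ∈ X \ S. Suppose c > 0 satisfies f_j(T) ≤ c · f_j(S) for all S ⊆ T ⊂ X and j ∈ X \ T. Then for any sets S ⊂ T ⊆ X with |T \ S| = r ≥ 1, it holds that f(T) − f(S) ≤ (1/r)·(1 + (r−1)·c) · Σ_{j ∈ T\S} f_j(S). -/
/-!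
Fix `k ∈ T \ S`. Adding the remaining elements of `T \ S` to `insert k S` one at a time,
each gain is at most `c` times its gain at `S`, so
`f T - f S ≤ f_k(S) + c · (Σ - f_k(S))`, where `Σ = ∑_{j ∈ T \ S} f_j(S)`.
Averaging this over the `r` choices of `k` gives the bound.
-/

open Finset

section MarginalGain

variable {α : Type*} [DecidableEq α]

def marginalGain (f : Finset α → ℝ) (S : Finset α) (j : α) : ℝ :=
  f (insert j S) - f S

lemma sub_le_mul_sum_marginalGain (f : Finset α → ℝ) (c : ℝ) {S U : Finset α}
    (hweak : ∀ (T : Finset α) (j : α), S ⊆ T → j ∉ T →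
      marginalGain f T j ≤ c * marginalGain f S j)
    (hSU : S ⊆ U) {W : Finset α} (hUW : Disjoint U W) :
    f (U ∪ W) - f U ≤ c * ∑ j ∈ W, marginalGain f S j := by
  induction W using Finset.induction_on with
  | empty => simp
  | insert a W haW ih =>
    rw [disjoint_insert_right] at hUW
    have haUW : a ∉ U ∪ W := by simp [hUW.1, haW]
    have hstep := hweak (U ∪ W) a (hSU.trans subset_union_left) haUW
    have hrest := ih hUW.2
    rw [union_insert, sum_insert haW, mul_add]
    unfold marginalGain at *
    linarith

lemma sub_le_marginalGain_add_mul (f : Finset α → ℝ) (c : ℝ) {S T : Finset α}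
    (hweak : ∀ (U : Finset α) (j : α), S ⊆ U → j ∉ U →
      marginalGain f U j ≤ c * marginalGain f S j)
    (hST : S ⊆ T) {k : α} (hk : k ∈ T \ S) :
    f T - f S ≤ marginalGain f S k +
      c * (∑ j ∈ T \ S, marginalGain f S j - marginalGain f S k) := by
  obtain ⟨hkT, hkS⟩ := mem_sdiff.mp hk
  have hunion : insert k S ∪ (T \ S).erase k = T := by
    ext x
    by_cases hx : x = k
    · simp [hx, hkT]
    · have := @hST x
      simp only [mem_union, mem_insert, mem_erase, mem_sdiff, hx]
      tauto
  have hdisj : Disjoint (insert k S) ((T \ S).erase k) := by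
    rw [disjoint_insert_left]
    exact ⟨notMem_erase k _, disjoint_of_subset_right (erase_subset _ _) disjoint_sdiff⟩
  have hrest := sub_le_mul_sum_marginalGain f c hweak (subset_insert k S) hdisj
  rw [hunion] at hrest
  rw [← sum_erase_add _ _ hk]
  unfold marginalGain at *
  linarith

end MarginalGain

lemma le_of_forall_le_add_mul_sum_sub {ι : Type*} {s : Finset ι} {r : ℕ} (hr : 1 ≤ r)
    (hs : s.card = r) (g : ι → ℝ) (x c : ℝ)
    (h : ∀ k ∈ s, x ≤ g k + c * (∑ j ∈ s, g j - g k)) :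
    x ≤ 1 / (r : ℝ) * (1 + ((r : ℝ) - 1) * c) * ∑ j ∈ s, g j := by
  have hsum : (r : ℝ) * x ≤ (1 + ((r : ℝ) - 1) * c) * ∑ j ∈ s, g j :=
    calc (r : ℝ) * x = ∑ _k ∈ s, x := by simp [hs]
      _ ≤ ∑ k ∈ s, (g k + c * (∑ j ∈ s, g j - g k)) := sum_le_sum h
      _ = (1 + ((r : ℝ) - 1) * c) * ∑ j ∈ s, g j := by
        simp only [mul_sub, sum_add_distrib, sum_sub_distrib, ← mul_sum, sum_const, hs,
          nsmul_eq_mul]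
        ring
  have hrpos : (0 : ℝ) < r := by exact_mod_cast hr
  rw [one_div, mul_assoc, le_inv_mul_iff₀ hrpos]
  exact hsum

theorem stmt_0_general {α : Type*} [DecidableEq α]
    (f : Finset α → ℝ)
    (c : ℝ)
    (hweak : ∀ (S T : Finset α) (j : α), S ⊆ T → j ∉ T →
      f (insert j T) - f T ≤ c * (f (insert j S) - f S))
    (S T : Finset α) (hST : S ⊂ T) (r : ℕ) (hr : 1 ≤ r)
    (hrcard : (T \ S).card = r) :
    f T - f S ≤ (1 / (r : ℝ)) * (1 + ((r : ℝ) - 1) * c) *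
      ∑ j ∈ T \ S, (f (insert j S) - f S) := by
  refine le_of_forall_le_add_mul_sum_sub hr hrcard _ _ c fun k hk => ?_
  exact sub_le_marginalGain_add_mul f c (fun U j hSU hjU => hweak S U j hSU hjU) hST.subset hk

/-- For a monotone nondecreasing set function with strictly positive
marginal gains and multiplicative weak-submodularity bound `c > 0`, for any
`S ⊂ T` with `|T \ S| = r ≥ 1` we have
`f(T) − f(S) ≤ (1/r)·(1 + (r−1)·c) · Σ_{j ∈ T\S} f_j(S)`. -/
theorem stmt_0 {α : Type*} [Fintype α] [DecidableEq α]
    (f : Finset α → ℝ)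
    (hmono : ∀ S T : Finset α, S ⊆ T → f S ≤ f T)
    (hpos : ∀ (S : Finset α) (j : α), j ∉ S → 0 < f (insert j S) - f S)
    (c : ℝ) (hc : 0 < c)
    (hweak : ∀ (S T : Finset α) (j : α), S ⊆ T → j ∉ T →
      f (insert j T) - f T ≤ c * (f (insert j S) - f S))
    (S T : Finset α) (hST : S ⊂ T) (r : ℕ) (hr : 1 ≤ r)
    (hrcard : (T \ S).card = r) :
    f T - f S ≤ (1 / (r : ℝ)) * (1 + ((r : ℝ) - 1) * c) *
      ∑ j ∈ T \ S, (f (insert j S) - f S) :=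
  stmt_0_general f c hweak S T hST r hr hrcard
end

section
/- Let X be a finite ground set and f : 2^X → ℝ a monotone nondecreasing set function. Suppose ε ∈ ℝ satisfies f_j(T) − f_j(S) ≤ ε for all S ⊆ T ⊂ X and j ∈ X \ T, where f_j(S) = f(S ∪ {j}) − f(S). Then for any sets S ⊂ T ⊆ X with |T \ S| = r ≥ 1, it holds that f(T) − f(S) ≤ (r−1)·ε + Σ_{j ∈ T\S} f_j(S). -/
open Finset

/-- For a monotone nondecreasing set function with additive
weak-submodularity bound `ε`, for any `S ⊂ T` with `|T \ S| = r ≥ 1` we have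
`f(T) − f(S) ≤ (r−1)·ε + Σ_{j ∈ T\S} f_j(S)`. -/
theorem stmt_1 {α : Type*} [Fintype α] [DecidableEq α]
    (f : Finset α → ℝ)
    (hmono : ∀ S T : Finset α, S ⊆ T → f S ≤ f T)
    (ε : ℝ)
    (hweak : ∀ (S T : Finset α) (j : α), S ⊆ T → j ∉ T →
      (f (insert j T) - f T) - (f (insert j S) - f S) ≤ ε)
    (S T : Finset α) (hST : S ⊂ T) (r : ℕ) (hr : 1 ≤ r)
    (hrcard : (T \ S).card = r) :
    f T - f S ≤ ((r : ℝ) - 1) * ε + ∑ j ∈ T \ S, (f (insert j S) - f S) := by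
  induction r generalizing T with
  | zero => omega
  | succ n ih =>
    have hpos : 0 < (T \ S).card := by omega
    obtain ⟨j, hj⟩ := Finset.card_pos.mp hpos
    have hjT : j ∈ T := (Finset.mem_sdiff.mp hj).1
    have hjS : j ∉ S := (Finset.mem_sdiff.mp hj).2
    rcases Nat.eq_zero_or_pos n with hn | hn
    · subst hn
      have hsingle : T \ S = {j} := by
        apply Finset.eq_singleton_iff_unique_mem.mpr
        refine ⟨hj, fun x hx => ?_⟩
        have := Finset.card_eq_one.mp hrcard
        obtain ⟨a, ha⟩ := this
        rw [ha] at hx hj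
        simp_all
      have hT : T = insert j S := by
        have := Finset.union_sdiff_of_subset hST.subset
        rw [hsingle] at this
        rw [← this]; ext x; simp [or_comm]
      rw [hsingle, Finset.sum_singleton, hT]
      push_cast
      ring_nf
      linarith
    · set T' := T.erase j with hT'
      have hST' : S ⊆ T' := Finset.subset_erase.mpr ⟨hST.subset, hjS⟩
      have hsd : T' \ S = (T \ S).erase j := by
        ext x; simp [hT', Finset.mem_erase, Finset.mem_sdiff]; tauto
      have hcard' : (T' \ S).card = n := by
        rw [hsd, Finset.card_erase_of_mem hj, hrcard]; omega
      have hstrict : S ⊂ T' := by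
        refine Finset.ssubset_iff_of_subset hST' |>.mpr ?_
        have : 0 < (T' \ S).card := by omega
        obtain ⟨x, hx⟩ := Finset.card_pos.mp this
        exact ⟨x, (Finset.mem_sdiff.mp hx).1, (Finset.mem_sdiff.mp hx).2⟩
      have hIH := ih T' hstrict hn hcard'
      have hjT' : j ∉ T' := Finset.notMem_erase j T
      have hw := hweak S T' j hST' hjT'
      rw [Finset.insert_erase hjT] at hw
      have hsum : ∑ i ∈ T \ S, (f (insert i S) - f S)
          = (f (insert j S) - f S) + ∑ i ∈ T' \ S, (f (insert i S) - f S) := by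
        rw [hsd, ← Finset.add_sum_erase _ _ hj]
      rw [hsum]
      push_cast
      linarith
end

section
/- Let X be a finite ground set and f : 2^X → ℝ a monotone nondecreasing set function with strictly positive marginal gains f_j(S) = f(S ∪ {j}) − f(S) for every S ⊂ X and j ∈ X \ S. Suppose c ≥ 1 satisfies f_j(T) ≤ c · f_j(S) for all S ⊆ T ⊂ X and j ∈ X \ T. Then for any set S ⊊ X and any set S* ⊆ X with |S* \ S| ≤ k (where k ≥ 1), it holds that f(S*) − f(S) ≤ c · k · max_{j ∈ X \ S} f_j(S). -/
open Finset

/-- For a monotone nondecreasing set function with strictly positive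
marginal gains and multiplicative weak-submodularity bound `c ≥ 1`, for any
`S ⊊ X` and any `S*` with `|S* \ S| ≤ k` (`k ≥ 1`) we have
`f(S*) − f(S) ≤ c·k · max_{j ∈ X \ S} f_j(S)`. -/
theorem stmt_2 {α : Type*} [Fintype α] [DecidableEq α]
    (f : Finset α → ℝ)
    (hmono : ∀ S T : Finset α, S ⊆ T → f S ≤ f T)
    (hpos : ∀ (S : Finset α) (j : α), j ∉ S → 0 < f (insert j S) - f S)
    (c : ℝ) (hc : 1 ≤ c)
    (hweak : ∀ (S T : Finset α) (j : α), S ⊆ T → j ∉ T →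
      f (insert j T) - f T ≤ c * (f (insert j S) - f S))
    (k : ℕ) (hk : 1 ≤ k)
    (S : Finset α) (hS : S ⊂ Finset.univ)
    (hne : (Finset.univ \ S).Nonempty)
    (Sstar : Finset α) (hstar : (Sstar \ S).card ≤ k) :
    f Sstar - f S ≤ c * (k : ℝ) *
      ((Finset.univ \ S).sup' hne fun j => f (insert j S) - f S) := by
  set M := (Finset.univ \ S).sup' hne fun j => f (insert j S) - f S with hM
  have hMpos : 0 < M := by
    obtain ⟨j, hj⟩ := hne
    exact lt_of_lt_of_le (hpos S j (Finset.mem_sdiff.mp hj).2) (Finset.le_sup' (fun j => f (insert j S) - f S) hj)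
  have key : ∀ D : Finset α, Disjoint D S → f (S ∪ D) - f S ≤ c * D.card * M := by
    intro D
    induction D using Finset.induction_on with
    | empty => intro _; simp
    | @insert a D' hj ih =>
      intro hdisj
      have hdisj' : Disjoint D' S := (Finset.disjoint_insert_left.mp hdisj).2
      have haS : a ∉ S := (Finset.disjoint_insert_left.mp hdisj).1
      have haSD : a ∉ S ∪ D' := fun h => by rcases Finset.mem_union.mp h with h|h; exacts [haS h, hj h]
      have hMa : f (insert a S) - f S ≤ M := Finset.le_sup' (fun j => f (insert j S) - f S) (by simp [haS])
      have h1 : f (insert a (S ∪ D')) - f (S ∪ D') ≤ c * M := by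
        calc f (insert a (S ∪ D')) - f (S ∪ D')
            ≤ c * (f (insert a S) - f S) := hweak S (S ∪ D') a Finset.subset_union_left haSD
          _ ≤ c * M := by nlinarith
      have h2 := ih hdisj'
      have hcard : (insert a D').card = D'.card + 1 := Finset.card_insert_of_notMem hj
      have hu : S ∪ insert a D' = insert a (S ∪ D') := by
        rw [Finset.union_insert]
      rw [hu, hcard]
      push_cast
      nlinarith
  have hSub : Sstar ⊆ S ∪ (Sstar \ S) := by
    intro x hx; by_cases h : x ∈ S <;> simp [h, hx]
  have hkey := key (Sstar \ S) Finset.sdiff_disjoint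
  have hle : f Sstar ≤ f (S ∪ (Sstar \ S)) := hmono _ _ hSub
  have hcard : ((Sstar \ S).card : ℝ) ≤ (k : ℝ) := by exact_mod_cast hstar
  have h3 : c * ((Sstar \ S).card : ℝ) * M ≤ c * (k : ℝ) * M :=
    mul_le_mul_of_nonneg_right (mul_le_mul_of_nonneg_left hcard (by linarith)) hMpos.le
  linarith
end

section
/- Let X be a finite ground set with |X| ≥ k ≥ 1, and let f : 2^X → ℝ be a monotone nondecreasing set function with f(∅) = 0 and strictly positive marginal gains f_j(S) = f(S ∪ {j}) − f(S) for every S ⊂ X and j ∈ X \ S. Suppose c ≥ 1 satisfies f_j(T) ≤ c · f_j(S) for all S ⊆ T ⊂ X and j ∈ X \ T. Let S_0 = ∅ and for i = 0, …, k−1 let S_{i+1} = S_i ∪ {j_i}, where j_i ∈ X \ S_i maximizes the marginal gain f_j(S_i) over j ∈ X \ S_i (greedy selection). Then f(S_k) ≥ (1 − e^{−1/c}) · f(S*), where S* maximizes f over all subsets of X of cardinality at most k. -/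
open Finset

/-- Greedy guarantee for monotone functions with multiplicative
weak-submodularity bound `c ≥ 1`: the greedy set of size `k` satisfies
`f(S_k) ≥ (1 − e^{−1/c}) · f(S*)` where `S*` is an optimal subset of
cardinality at most `k`. -/
theorem stmt_3 {α : Type*} [Fintype α] [DecidableEq α]
    (f : Finset α → ℝ)
    (k : ℕ) (hk : 1 ≤ k) (hcard : k ≤ Fintype.card α)
    (hmono : ∀ S T : Finset α, S ⊆ T → f S ≤ f T)
    (hempty : f ∅ = 0)
    (hpos : ∀ (S : Finset α) (j : α), j ∉ S → 0 < f (insert j S) - f S)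
    (c : ℝ) (hc : 1 ≤ c)
    (hweak : ∀ (S T : Finset α) (j : α), S ⊆ T → j ∉ T →
      f (insert j T) - f T ≤ c * (f (insert j S) - f S))
    (Sseq : ℕ → Finset α) (jseq : ℕ → α)
    (hinit : Sseq 0 = ∅)
    (hgreedy : ∀ i < k,
      jseq i ∉ Sseq i ∧
      Sseq (i + 1) = insert (jseq i) (Sseq i) ∧
      ∀ j ∉ Sseq i,
        f (insert j (Sseq i)) - f (Sseq i) ≤
          f (insert (jseq i) (Sseq i)) - f (Sseq i))
    (Sstar : Finset α) (hstar_card : Sstar.card ≤ k)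
    (hstar_opt : ∀ T : Finset α, T.card ≤ k → f T ≤ f Sstar) :
    (1 - Real.exp (-1 / c)) * f Sstar ≤ f (Sseq k) := by
  have hc0 : (0:ℝ) < c := lt_of_lt_of_le one_pos hc
  have hck : (1:ℝ) ≤ c * k := by
    have : (1:ℝ) ≤ (k:ℝ) := by exact_mod_cast hk
    nlinarith
  have hck0 : (0:ℝ) < c * k := lt_of_lt_of_le one_pos hck
  -- auxiliary: telescoping bound
  have aux : ∀ T S : Finset α, f (S ∪ T) - f S ≤ ∑ j ∈ T \ S, c * (f (insert j S) - f S) := by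
    intro T
    induction T using Finset.induction_on with
    | empty => intro S; simp
    | @insert a T ha ih =>
      intro S
      by_cases haS : a ∈ S
      · have h1 : S ∪ insert a T = S ∪ T := by
          rw [Finset.union_insert, Finset.insert_eq_self.mpr (Finset.mem_union_left _ haS)]
        have h2 : insert a T \ S = T \ S := by
          rw [Finset.insert_sdiff_of_mem _ haS]
        rw [h1, h2]; exact ih S
      · have haST : a ∉ S ∪ T := by simp [haS, ha]
        have h1 : S ∪ insert a T = insert a (S ∪ T) := by
          rw [Finset.union_insert]
        have h2 : insert a T \ S = insert a (T \ S) := Finset.insert_sdiff_of_notMem _ haS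
        have hnm : a ∉ T \ S := fun h => ha (Finset.mem_sdiff.mp h).1
        rw [h1, h2, Finset.sum_insert hnm]
        have hw := hweak S (S ∪ T) a Finset.subset_union_left haST
        have := ih S
        linarith
  set D := f Sstar with hD
  have hD0 : 0 ≤ D := by
    have := hmono ∅ Sstar (Finset.empty_subset _)
    linarith [hempty ▸ this]
  set r : ℝ := 1 - 1 / (c * k) with hr
  have hr0 : 0 ≤ r := by
    have : 1 / (c * k) ≤ 1 := by
      rw [div_le_one hck0]; linarith
    rw [hr]; linarith
  -- per-step contraction
  have step : ∀ i < k, D - f (Sseq (i+1)) ≤ r * (D - f (Sseq i)) := by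
    intro i hi
    obtain ⟨hj, hS1, hmax⟩ := hgreedy i hi
    set S := Sseq i
    set gain := f (insert (jseq i) S) - f S with hg
    have hgain0 : 0 < gain := hpos S _ hj
    have h1 : D - f S ≤ f (S ∪ Sstar) - f S := by
      have := hmono Sstar (S ∪ Sstar) Finset.subset_union_right
      linarith
    have h2 : f (S ∪ Sstar) - f S ≤ ∑ j ∈ Sstar \ S, c * (f (insert j S) - f S) :=
      aux Sstar S
    have h3 : ∑ j ∈ Sstar \ S, c * (f (insert j S) - f S) ≤ (k : ℝ) * (c * gain) := by
      have hb : ∀ j ∈ Sstar \ S, c * (f (insert j S) - f S) ≤ c * gain := by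
        intro j hjm
        have hjS : j ∉ S := (Finset.mem_sdiff.mp hjm).2
        exact mul_le_mul_of_nonneg_left (hmax j hjS) (le_of_lt hc0)
      calc ∑ j ∈ Sstar \ S, c * (f (insert j S) - f S)
          ≤ (Sstar \ S).card • (c * gain) := Finset.sum_le_card_nsmul _ _ _ hb
        _ = ((Sstar \ S).card : ℝ) * (c * gain) := by rw [nsmul_eq_mul]
        _ ≤ (k : ℝ) * (c * gain) := by
            apply mul_le_mul_of_nonneg_right _ (by positivity)
            exact_mod_cast le_trans (Finset.card_le_card (Finset.sdiff_subset)) hstar_card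
    have hkey : D - f S ≤ c * k * (f (Sseq (i+1)) - f S) := by
      rw [hS1]
      calc D - f S ≤ (k : ℝ) * (c * gain) := by linarith
        _ = c * k * gain := by ring
    -- derive contraction
    have h6 : (D - f S) / (c * k) ≤ f (Sseq (i+1)) - f S := by
      rw [div_le_iff₀ hck0, mul_comm]; linarith
    have h7 : r * (D - f S) = (D - f S) - (D - f S) / (c * k) := by
      rw [hr]; ring
    rw [h7]; linarith
  -- iterate
  have iter : ∀ i ≤ k, D - f (Sseq i) ≤ r ^ i * D := by
    intro i
    induction i with
    | zero => intro _; simp [hinit, hempty]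
    | succ n ih =>
      intro hn
      have hnk : n < k := hn
      have h1 := step n hnk
      have h2 := ih (le_of_lt hnk)
      calc D - f (Sseq (n+1)) ≤ r * (D - f (Sseq n)) := h1
        _ ≤ r * (r ^ n * D) := mul_le_mul_of_nonneg_left h2 hr0
        _ = r ^ (n+1) * D := by ring
  have hfin := iter k le_rfl
  have hrexp : r ≤ Real.exp (-(1 / (c * k))) := by
    have := Real.add_one_le_exp (-(1 / (c * k)))
    linarith
  have hpow : r ^ k ≤ Real.exp (-1 / c) := by
    calc r ^ k ≤ (Real.exp (-(1 / (c * k)))) ^ k := pow_le_pow_left₀ hr0 hrexp k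
      _ = Real.exp ((k : ℝ) * (-(1 / (c * k)))) := by
          rw [← Real.exp_nat_mul]
      _ = Real.exp (-1 / c) := by
          congr 1
          have hk0 : (k:ℝ) ≠ 0 := by positivity
          field_simp
  have : r ^ k * D ≤ Real.exp (-1 / c) * D := mul_le_mul_of_nonneg_right hpow hD0
  linarith
end

section
/- Let X be a finite index set. For each i ∈ X, let X_i be an m × m real matrix, z_i ∈ ℝ^m, and σ_i > 0; let P be an m × m real symmetric positive semidefinite matrix, and set I_i = (1/σ_i²)·(X_i P X_i^⊤ + z_i z_i^⊤). Let I_x be an m × m real symmetric positive definite matrix, and define the D-optimality set function f^D(S) = log det(I_x + Σ_{i∈S} I_i) − log det(I_x) for S ⊆ X. Then f^D is submodular: for all S ⊆ T ⊂ X and j ∈ X \ T, f^D(S ∪ {j}) − f^D(S) ≥ f^D(T ∪ {j}) − f^D(T). -/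
/-!
With `A = I_x + Σ_{i∈S} I_i` and `D = Σ_{i∈T\S} I_i`, the claim says that the gain
`log det (A + M) - log det A` from adding the positive semidefinite `M = I_j` can only drop when
`D` is added to `A`. Write `M` as a sum of rank-one terms `w wᵀ` and add them one at a time.
By the matrix determinant lemma, adding `v vᵀ` to a positive definite `A` raises `log det` by
`log (1 + vᵀ A⁻¹ v)`, and `vᵀ A⁻¹ v` can only shrink when `A` grows by a positive semidefinite
matrix, because it is the maximum over `x` of `2 xᵀ v - xᵀ A x`.
-/

open Finset Matrix

namespace Matrix

variable {n : Type*} [Fintype n] [DecidableEq n]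

theorem det_add_vecMulVec {A : Matrix n n ℝ} (hA : IsUnit A.det) (u v : n → ℝ) :
    (A + vecMulVec u v).det = A.det * (1 + v ⬝ᵥ A⁻¹ *ᵥ u) := by
  have : A + vecMulVec u v = A * (1 + vecMulVec (A⁻¹ *ᵥ u) v) := by
    rw [Matrix.mul_add, Matrix.mul_one, vecMulVec_eq Unit, vecMulVec_eq Unit, ← Matrix.mul_assoc,
      ← replicateCol_mulVec, mulVec_mulVec, mul_nonsing_inv A hA, one_mulVec]
  rw [this, det_mul, vecMulVec_eq Unit, det_one_add_replicateCol_mul_replicateRow]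

theorem PosDef.two_mul_dotProduct_sub_le {A : Matrix n n ℝ} (hA : A.PosDef) (x v : n → ℝ) :
    2 * (x ⬝ᵥ v) - x ⬝ᵥ A *ᵥ x ≤ v ⬝ᵥ A⁻¹ *ᵥ v := by
  have hsym : Aᵀ = A := by simpa using hA.isHermitian.eq
  set y := A⁻¹ *ᵥ v
  have hAy : A *ᵥ y = v := by
    rw [mulVec_mulVec, mul_nonsing_inv A hA.det_pos.ne'.isUnit, one_mulVec]
  have hxy : y ⬝ᵥ A *ᵥ x = x ⬝ᵥ v := by
    rw [dotProduct_mulVec, ← mulVec_transpose, hsym, hAy, dotProduct_comm]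
  have hsq := hA.posSemidef.dotProduct_mulVec_nonneg (x - y)
  simp only [star_trivial, mulVec_sub, sub_dotProduct, dotProduct_sub, hAy, hxy] at hsq
  rw [dotProduct_comm y v] at hsq
  linarith

theorem PosSemidef.eq_sum_vecMulVec {M : Matrix n n ℝ} (hM : M.PosSemidef) :
    ∃ w : n → n → ℝ, M = ∑ k, vecMulVec (w k) (w k) := by
  open scoped MatrixOrder in
  obtain ⟨B, rfl⟩ := CStarAlgebra.nonneg_iff_eq_star_mul_self.mp hM.nonneg
  refine ⟨B, ?_⟩
  ext i j
  simp [mul_apply, sum_apply, vecMulVec_apply]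

theorem PosDef.dotProduct_inv_add_mulVec_le {A D : Matrix n n ℝ} (hA : A.PosDef)
    (hD : D.PosSemidef) (v : n → ℝ) :
    v ⬝ᵥ (A + D)⁻¹ *ᵥ v ≤ v ⬝ᵥ A⁻¹ *ᵥ v := by
  have hB : (A + D).PosDef := hA.add_posSemidef hD
  set u := (A + D)⁻¹ *ᵥ v
  have hBu : (A + D) *ᵥ u = v := by
    rw [mulVec_mulVec, mul_nonsing_inv _ hB.det_pos.ne'.isUnit, one_mulVec]
  have huv : u ⬝ᵥ (A + D) *ᵥ u = v ⬝ᵥ u := by rw [hBu, dotProduct_comm]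
  have hDu : 0 ≤ u ⬝ᵥ D *ᵥ u := by simpa using hD.dotProduct_mulVec_nonneg u
  have hmax := hA.two_mul_dotProduct_sub_le u v
  rw [add_mulVec, dotProduct_add] at huv
  rw [dotProduct_comm u v] at hmax
  linarith

theorem PosDef.log_det_add_vecMulVec_self_sub {A : Matrix n n ℝ} (hA : A.PosDef) (v : n → ℝ) :
    Real.log (A + vecMulVec v v).det - Real.log A.det = Real.log (1 + v ⬝ᵥ A⁻¹ *ᵥ v) := by
  have hq : 0 < 1 + v ⬝ᵥ A⁻¹ *ᵥ v := by
    have hv := hA.inv.posSemidef.dotProduct_mulVec_nonneg v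
    simp only [star_trivial] at hv
    linarith
  rw [det_add_vecMulVec hA.det_pos.ne'.isUnit, Real.log_mul hA.det_pos.ne' hq.ne',
    add_sub_cancel_left]

theorem PosDef.log_det_add_add_vecMulVec_self_sub_le {A D : Matrix n n ℝ} (hA : A.PosDef)
    (hD : D.PosSemidef) (v : n → ℝ) :
    Real.log (A + D + vecMulVec v v).det - Real.log (A + D).det ≤
      Real.log (A + vecMulVec v v).det - Real.log A.det := by
  have hB : (A + D).PosDef := hA.add_posSemidef hD
  rw [hA.log_det_add_vecMulVec_self_sub, hB.log_det_add_vecMulVec_self_sub]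
  have hv := hB.inv.posSemidef.dotProduct_mulVec_nonneg v
  simp only [star_trivial] at hv
  exact Real.log_le_log (by linarith) (by linarith [hA.dotProduct_inv_add_mulVec_le hD v])

theorem PosDef.log_det_add_add_sum_vecMulVec_sub_le {κ : Type*} [DecidableEq κ]
    {A D : Matrix n n ℝ} (hA : A.PosDef) (hD : D.PosSemidef) (w : κ → n → ℝ) (s : Finset κ) :
    Real.log (A + D + ∑ k ∈ s, vecMulVec (w k) (w k)).det - Real.log (A + D).det ≤
      Real.log (A + ∑ k ∈ s, vecMulVec (w k) (w k)).det - Real.log A.det := by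
  induction s using Finset.induction with
  | empty => simp
  | @insert a s ha ih =>
    have hA' : (A + ∑ k ∈ s, vecMulVec (w k) (w k)).PosDef :=
      hA.add_posSemidef <| posSemidef_sum s fun k _ => by
        simpa using posSemidef_vecMulVec_self_star (w k)
    have step := hA'.log_det_add_add_vecMulVec_self_sub_le hD (w a)
    rw [add_right_comm A] at step
    rw [sum_insert ha, add_comm (vecMulVec _ _), ← add_assoc, ← add_assoc]
    linarith

theorem PosDef.log_det_add_add_sub_le {A D M : Matrix n n ℝ} (hA : A.PosDef)
    (hD : D.PosSemidef) (hM : M.PosSemidef) :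
    Real.log (A + D + M).det - Real.log (A + D).det ≤ Real.log (A + M).det - Real.log A.det := by
  obtain ⟨w, rfl⟩ := hM.eq_sum_vecMulVec
  exact hA.log_det_add_add_sum_vecMulVec_sub_le hD w univ

end Matrix

theorem stmt_8_general {ι : Type*} [DecidableEq ι] {m : ℕ}
    (Xm : ι → Matrix (Fin m) (Fin m) ℝ) (z : ι → Fin m → ℝ)
    (σ : ι → ℝ)
    (P : Matrix (Fin m) (Fin m) ℝ) (hP : P.PosSemidef)
    (Ix : Matrix (Fin m) (Fin m) ℝ) (hIx : Ix.PosDef)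
    (I : ι → Matrix (Fin m) (Fin m) ℝ)
    (hI : ∀ i, I i = (1 / (σ i) ^ 2) •
      (Xm i * P * (Xm i)ᵀ + vecMulVec (z i) (z i)))
    (fD : Finset ι → ℝ)
    (hfD : ∀ S : Finset ι,
      fD S = Real.log (Ix + ∑ i ∈ S, I i).det - Real.log Ix.det) :
    ∀ (S T : Finset ι) (j : ι), S ⊆ T → j ∉ T →
      fD (insert j T) - fD T ≤ fD (insert j S) - fD S := by
  intro S T j hST hjT
  have hI_psd (i : ι) : (I i).PosSemidef := by
    rw [hI i]
    refine PosSemidef.smul ?_ (by positivity)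
    simpa using (hP.mul_mul_conjTranspose_same (Xm i)).add (posSemidef_vecMulVec_self_star (z i))
  have hgain := (hIx.add_posSemidef (posSemidef_sum S fun i _ => hI_psd i)).log_det_add_add_sub_le
    (posSemidef_sum (T \ S) fun i _ => hI_psd i) (hI_psd j)
  have hT : Ix + ∑ i ∈ T, I i = Ix + ∑ i ∈ S, I i + ∑ i ∈ T \ S, I i := by
    rw [← sum_sdiff hST]; abel
  simp only [hfD, sum_insert hjT, sum_insert (fun h => hjT (hST h))]
  rw [add_left_comm _ (I j), add_comm (I j), add_left_comm _ (I j), add_comm (I j), hT]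
  linarith

/-- The D-optimality criterion of the Van Trees bound,
`f^D(S) = log det(I_x + Σ_{i∈S} I_i) − log det(I_x)` with
`I_i = (1/σ_i²)(X_i P X_iᵀ + z_i z_iᵀ)`, is submodular: for all
`S ⊆ T ⊂ X` and `j ∈ X \ T`, `f^D_j(S) ≥ f^D_j(T)`. -/
theorem stmt_8 {ι : Type*} [Fintype ι] [DecidableEq ι] {m : ℕ}
    (Xm : ι → Matrix (Fin m) (Fin m) ℝ) (z : ι → Fin m → ℝ)
    (σ : ι → ℝ) (hσ : ∀ i, 0 < σ i)
    (P : Matrix (Fin m) (Fin m) ℝ) (hP : P.PosSemidef)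
    (Ix : Matrix (Fin m) (Fin m) ℝ) (hIx : Ix.PosDef)
    (I : ι → Matrix (Fin m) (Fin m) ℝ)
    (hI : ∀ i, I i = (1 / (σ i) ^ 2) •
      (Xm i * P * (Xm i)ᵀ + vecMulVec (z i) (z i)))
    (fD : Finset ι → ℝ)
    (hfD : ∀ S : Finset ι,
      fD S = Real.log (Ix + ∑ i ∈ S, I i).det - Real.log Ix.det) :
    ∀ (S T : Finset ι) (j : ι), S ⊆ T → j ∉ T →
      fD (insert j T) - fD T ≤ fD (insert j S) - fD S :=
  stmt_8_general Xm z σ P hP Ix hIx I hI fD hfD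
end

section
/- Let A and B be m × m real symmetric positive definite matrices with A ≼ B in the Loewner order (i.e., B − A is positive semidefinite), and let M be an m × m real symmetric positive semidefinite matrix. Then log det(B + M) − log det(B) ≤ log det(A + M) − log det(A). -/
/-!
Write `M = N* N`. For positive definite `X` the matrix determinant lemma gives
`log det (X + M) - log det X = log det (1 + N X⁻¹ N*)`. Inversion reverses the Loewner order,
so `N B⁻¹ N* ≤ N A⁻¹ N*`, and the determinant is monotone on positive definite matrices
because `det (1 + Y) ≥ 1` for `Y ≥ 0`.
-/

open Matrix
open scoped MatrixOrder ComplexOrder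

namespace Matrix

variable {n 𝕜 : Type*} [Fintype n] [DecidableEq n] [RCLike 𝕜]

theorem IsHermitian.det_cfc {A : Matrix n n ℝ} (hA : A.IsHermitian) (f : ℝ → ℝ) :
    (cfc f A).det = ∏ i, f (hA.eigenvalues i) := by
  rw [hA.cfc_eq]
  simp [IsHermitian.cfc, -Unitary.conjStarAlgAut_apply]

theorem one_le_det_one_add {Y : Matrix n n ℝ} (hY : 0 ≤ Y) : 1 ≤ (1 + Y).det := by
  have hcfc : 1 + Y = cfc (fun x : ℝ ↦ 1 + x) Y := by
    rw [cfc_const_add (1 : ℝ) (fun x ↦ x) Y, cfc_id' ℝ Y, map_one]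
  rw [hcfc, IsHermitian.det_cfc (IsSelfAdjoint.of_nonneg hY)]
  exact Finset.one_le_prod fun i _ ↦
    le_add_of_nonneg_right ((nonneg_iff_posSemidef.mp hY).eigenvalues_nonneg i)

theorem PosDef.det_le_det {P Q : Matrix n n ℝ} (hP : P.PosDef) (hPQ : P ≤ Q) :
    P.det ≤ Q.det := by
  obtain ⟨F, hF⟩ := CStarAlgebra.nonneg_iff_eq_star_mul_self.mp (sub_nonneg.mpr hPQ)
  have hQ : Q = P + star F * F := by rw [← hF]; abel
  have hconj : 0 ≤ F * P⁻¹ * star F := star_right_conjugate_nonneg hP.inv.posSemidef.nonneg F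
  rw [hQ, det_add_mul _ _ hP.det_pos.ne'.isUnit]
  exact le_mul_of_one_le_right hP.det_pos.le (one_le_det_one_add hconj)

/-- Both Schur complements of the block matrix `[A⁻¹ 1; 1 B]` decide its positivity: one is
`B - A`, the other `A⁻¹ - B⁻¹`. -/
theorem PosDef.inv_le_inv {A B : Matrix n n 𝕜} (hA : A.PosDef) (hAB : A ≤ B) :
    B⁻¹ ≤ A⁻¹ := by
  have hB : B.PosDef := by simpa using hA.add_posSemidef hAB
  have := hA.isUnit.invertible
  have := hB.isUnit.invertible
  have hschur₁ := PosDef.fromBlocks₁₁ (1 : Matrix n n 𝕜) B hA.inv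
  have hschur₂ := PosDef.fromBlocks₂₂ A⁻¹ (1 : Matrix n n 𝕜) hB
  simp only [conjTranspose_one, Matrix.one_mul, Matrix.mul_one, inv_inv_of_invertible]
    at hschur₁ hschur₂
  rw [le_iff, ← hschur₂, hschur₁]
  exact hAB

theorem PosDef.log_det_add_star_mul_self_sub_log_det {X : Matrix n n ℝ} (hX : X.PosDef)
    (N : Matrix n n ℝ) :
    Real.log (X + star N * N).det - Real.log X.det = Real.log (1 + N * X⁻¹ * star N).det := by
  have hconj : 0 ≤ N * X⁻¹ * star N := star_right_conjugate_nonneg hX.inv.posSemidef.nonneg N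
  rw [det_add_mul _ _ hX.det_pos.ne'.isUnit,
    Real.log_mul hX.det_pos.ne' (zero_lt_one.trans_le (one_le_det_one_add hconj)).ne',
    add_sub_cancel_left]

end Matrix

/-- If `A ≼ B` are symmetric positive definite matrices and `M`
is symmetric positive semidefinite, then
`log det(B + M) − log det B ≤ log det(A + M) − log det A`. -/
theorem stmt_9 {m : ℕ}
    (A B M : Matrix (Fin m) (Fin m) ℝ)
    (hA : A.PosDef) (hB : B.PosDef)
    (hAB : (B - A).PosSemidef)
    (hM : M.PosSemidef) :
    Real.log (B + M).det - Real.log B.det ≤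
      Real.log (A + M).det - Real.log A.det := by
  obtain ⟨N, rfl⟩ := CStarAlgebra.nonneg_iff_eq_star_mul_self.mp hM.nonneg
  rw [hA.log_det_add_star_mul_self_sub_log_det, hB.log_det_add_star_mul_self_sub_log_det]
  have hconjB : 0 ≤ N * B⁻¹ * star N := star_right_conjugate_nonneg hB.inv.posSemidef.nonneg N
  have hconj_le : N * B⁻¹ * star N ≤ N * A⁻¹ * star N :=
    star_right_conjugate_le_conjugate (hA.inv_le_inv (le_iff.mpr hAB)) N
  have hposB : (1 + N * B⁻¹ * star N).PosDef :=
    PosDef.one.add_posSemidef (nonneg_iff_posSemidef.mp hconjB)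
  exact Real.log_le_log hposB.det_pos (hposB.det_le_det (add_le_add_right hconj_le 1))
end

section
/- Let X be a finite index set. For each i ∈ X, let I_i be an m × m real symmetric positive semidefinite matrix, and let I_x be an m × m real symmetric positive definite matrix. Define the E-optimality set function f^E(S) = λ_min(I_x + Σ_{i∈S} I_i) − λ_min(I_x) for S ⊆ X, and write f^E_j(S) = f^E(S ∪ {j}) − f^E(S). Then for all S ⊆ T ⊂ X and j ∈ X \ T such that I_j is positive definite (equivalently λ_min(I_j) > 0), it holds that f^E_j(T) ≤ (λ_max(I_j) / λ_min(I_j)) · f^E_j(S). -/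
open Finset Matrix

/-!
In the Loewner order, `lambdaMin A` is the largest `r` with `r • 1 ≤ A`, and
`A ≤ lambdaMax A • 1`. Hence adding `B` to `A` raises `lambdaMin` by at least `lambdaMin B`
and at most `lambdaMax B` (Weyl's inequalities), so every marginal gain `f^E_j` lies in
`[λ_min(I_j), λ_max(I_j)]`, and the ratio of two of them is at most `λ_max(I_j) / λ_min(I_j)`.
-/

noncomputable def lambdaMin {m : ℕ} (A : Matrix (Fin m) (Fin m) ℝ) : ℝ :=
  sInf (spectrum ℝ A)

noncomputable def lambdaMax {m : ℕ} (A : Matrix (Fin m) (Fin m) ℝ) : ℝ :=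
  sSup (spectrum ℝ A)

open scoped MatrixOrder

lemma lambdaMin_fin_zero (A : Matrix (Fin 0) (Fin 0) ℝ) : lambdaMin A = 0 := by
  rw [lambdaMin, spectrum.of_subsingleton, Real.sInf_empty]

namespace Matrix.IsHermitian

variable {m : ℕ} {A B : Matrix (Fin m) (Fin m) ℝ}

lemma spectrum_real_nonempty [NeZero m] (hA : A.IsHermitian) : (spectrum ℝ A).Nonempty := by
  rw [hA.spectrum_real_eq_range_eigenvalues]
  exact Set.range_nonempty _

lemma le_lambdaMin_iff [NeZero m] (hA : A.IsHermitian) {r : ℝ} :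
    r ≤ lambdaMin A ↔ algebraMap ℝ _ r ≤ A := by
  rw [algebraMap_le_iff_le_spectrum hA, lambdaMin,
    le_csInf_iff A.finite_real_spectrum.bddBelow hA.spectrum_real_nonempty]

lemma algebraMap_lambdaMin_le [NeZero m] (hA : A.IsHermitian) :
    algebraMap ℝ _ (lambdaMin A) ≤ A :=
  hA.le_lambdaMin_iff.mp le_rfl

lemma le_algebraMap_lambdaMax (hA : A.IsHermitian) : A ≤ algebraMap ℝ _ (lambdaMax A) :=
  (le_algebraMap_iff_spectrum_le hA).mpr fun _ hx => le_csSup A.finite_real_spectrum.bddAbove hx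

lemma lambdaMin_le_lambdaMax [NeZero m] (hA : A.IsHermitian) : lambdaMin A ≤ lambdaMax A :=
  csInf_le_csSup hA.spectrum_real_nonempty A.finite_real_spectrum.bddBelow
    A.finite_real_spectrum.bddAbove

lemma lambdaMin_add_lambdaMin_le [NeZero m] (hA : A.IsHermitian) (hB : B.IsHermitian) :
    lambdaMin A + lambdaMin B ≤ lambdaMin (A + B) := by
  rw [(hA.add hB).le_lambdaMin_iff, map_add]
  exact add_le_add hA.algebraMap_lambdaMin_le hB.algebraMap_lambdaMin_le

lemma lambdaMin_add_le_lambdaMin_add_lambdaMax [NeZero m] (hA : A.IsHermitian)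
    (hB : B.IsHermitian) : lambdaMin (A + B) ≤ lambdaMin A + lambdaMax B := by
  rw [← sub_le_iff_le_add, hA.le_lambdaMin_iff, map_sub, sub_le_iff_le_add]
  exact (hA.add hB).algebraMap_lambdaMin_le.trans (add_le_add_right hB.le_algebraMap_lambdaMax A)

end Matrix.IsHermitian

lemma Matrix.PosDef.lambdaMin_pos {m : ℕ} [NeZero m] {A : Matrix (Fin m) (Fin m) ℝ}
    (hA : A.PosDef) : 0 < lambdaMin A := by
  obtain ⟨i, hi⟩ : lambdaMin A ∈ Set.range hA.isHermitian.eigenvalues := by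
    rw [← hA.isHermitian.spectrum_real_eq_range_eigenvalues]
    exact hA.isHermitian.spectrum_real_nonempty.csInf_mem A.finite_real_spectrum
  exact hi ▸ hA.eigenvalues_pos i

theorem stmt_11_general {ι : Type*} [DecidableEq ι] {m : ℕ}
    (I : ι → Matrix (Fin m) (Fin m) ℝ) (hI : ∀ i, (I i).PosSemidef)
    (Ix : Matrix (Fin m) (Fin m) ℝ) (hIx : Ix.PosDef)
    (fE : Finset ι → ℝ)
    (hfE : ∀ S : Finset ι,
      fE S = lambdaMin (Ix + ∑ i ∈ S, I i) - lambdaMin Ix) :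
    ∀ (S T : Finset ι) (j : ι), S ⊆ T → j ∉ T → (I j).PosDef →
      fE (insert j T) - fE T ≤
        (lambdaMax (I j) / lambdaMin (I j)) * (fE (insert j S) - fE S) := by
  intro S T j hST hjT hj
  -- in dimension 0 every spectrum is empty, so every `lambdaMin` is the junk value `sInf ∅ = 0`
  obtain rfl | _ := eq_zero_or_neZero m
  · simp [hfE, lambdaMin_fin_zero]
  have hA : ∀ U : Finset ι, (Ix + ∑ i ∈ U, I i).IsHermitian := fun U =>
    hIx.isHermitian.add (posSemidef_sum U fun i _ => hI i).isHermitian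
  have hgain : ∀ U, j ∉ U → fE (insert j U) - fE U =
      lambdaMin ((Ix + ∑ i ∈ U, I i) + I j) - lambdaMin (Ix + ∑ i ∈ U, I i) := by
    intro U hjU
    rw [hfE, hfE, sum_insert hjU, add_comm (I j), add_assoc]
    ring
  have hgainT : fE (insert j T) - fE T ≤ lambdaMax (I j) := by
    rw [hgain T hjT]
    linarith [(hA T).lambdaMin_add_le_lambdaMin_add_lambdaMax hj.isHermitian]
  have hgainS : lambdaMin (I j) ≤ fE (insert j S) - fE S := by
    rw [hgain S fun h => hjT (hST h)]
    linarith [(hA S).lambdaMin_add_lambdaMin_le hj.isHermitian]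
  have hmin := hj.lambdaMin_pos
  calc fE (insert j T) - fE T ≤ lambdaMax (I j) := hgainT
    _ = lambdaMax (I j) / lambdaMin (I j) * lambdaMin (I j) := (div_mul_cancel₀ _ hmin.ne').symm
    _ ≤ lambdaMax (I j) / lambdaMin (I j) * (fE (insert j S) - fE S) :=
      mul_le_mul_of_nonneg_left hgainS <|
        div_nonneg (hmin.le.trans hj.isHermitian.lambdaMin_le_lambdaMax) hmin.le

/-- Multiplicative weak-submodularity bound for the E-optimality
criterion `f^E(S) = λ_min(I_x + Σ_{i∈S} I_i) − λ_min(I_x)`: for `S ⊆ T ⊂ X`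
and `j ∉ T` with `I_j` positive definite,
`f^E_j(T) ≤ (λ_max(I_j)/λ_min(I_j)) · f^E_j(S)`. -/
theorem stmt_11 {ι : Type*} [Fintype ι] [DecidableEq ι] {m : ℕ}
    (I : ι → Matrix (Fin m) (Fin m) ℝ) (hI : ∀ i, (I i).PosSemidef)
    (Ix : Matrix (Fin m) (Fin m) ℝ) (hIx : Ix.PosDef)
    (fE : Finset ι → ℝ)
    (hfE : ∀ S : Finset ι,
      fE S = lambdaMin (Ix + ∑ i ∈ S, I i) - lambdaMin Ix) :
    ∀ (S T : Finset ι) (j : ι), S ⊆ T → j ∉ T → (I j).PosDef →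
      fE (insert j T) - fE T ≤
        (lambdaMax (I j) / lambdaMin (I j)) * (fE (insert j S) - fE S) :=
  stmt_11_general I hI Ix hIx fE hfE
end

section
/- Let X be a finite index set. For each i ∈ X, let I_i be an m × m real symmetric positive semidefinite matrix, and let I_x be an m × m real symmetric positive definite matrix. Define the E-optimality set function f^E(S) = λ_min(I_x + Σ_{i∈S} I_i) − λ_min(I_x) for S ⊆ X, and write f^E_j(S) = f^E(S ∪ {j}) − f^E(S). Then for all S ⊆ T ⊂ X and j ∈ X \ T, it holds that f^E_j(T) − f^E_j(S) ≤ λ_max(I_j) − λ_min(I_j). -/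
open Finset Matrix

/-! The E-optimality gain of adding `I_j` to an information matrix `A` is
`λ_min(A + I_j) − λ_min(A)`, and by Weyl's inequalities it lies between `λ_min(I_j)` and
`λ_max(I_j)` whatever `A` is. Bounding the gain at `T` from above and the gain at `S` from
below gives the claim. Weyl's lower inequality holds because `λ_min(A)` is the largest `c`
with `c • 1 ≤ A` in the Loewner order; the upper one is the lower one applied to
`(A + B) + (-B)`. -/

open scoped MatrixOrder

section Weyl

variable {m : ℕ} {A B : Matrix (Fin m) (Fin m) ℝ}

lemma algebraMap_lambdaMin_le (hA : A.IsHermitian) : algebraMap ℝ _ (lambdaMin A) ≤ A :=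
  (algebraMap_le_iff_le_spectrum hA.isSelfAdjoint).2 fun _ hx ↦
    csInf_le A.finite_real_spectrum.bddBelow hx

lemma le_lambdaMin [Nonempty (Fin m)] (hA : A.IsHermitian) {c : ℝ}
    (hc : algebraMap ℝ _ c ≤ A) : c ≤ lambdaMin A :=
  le_csInf ⟨_, hA.eigenvalues_mem_spectrum_real (Classical.arbitrary _)⟩
    ((algebraMap_le_iff_le_spectrum hA.isSelfAdjoint).1 hc)

lemma lambdaMin_neg (A : Matrix (Fin m) (Fin m) ℝ) : lambdaMin (-A) = -lambdaMax A := by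
  rw [lambdaMin, lambdaMax, ← spectrum.neg_eq, Real.sInf_neg]

lemma lambdaMin_add_lambdaMin_le (hA : A.IsHermitian) (hB : B.IsHermitian) :
    lambdaMin A + lambdaMin B ≤ lambdaMin (A + B) := by
  rcases isEmpty_or_nonempty (Fin m) with _ | _
  · simp [lambdaMin, spectrum.of_subsingleton]
  · refine le_lambdaMin (hA.add hB) ?_
    rw [map_add]
    exact add_le_add (algebraMap_lambdaMin_le hA) (algebraMap_lambdaMin_le hB)

lemma lambdaMin_add_le_lambdaMin_add_lambdaMax (hA : A.IsHermitian) (hB : B.IsHermitian) :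
    lambdaMin (A + B) ≤ lambdaMin A + lambdaMax B := by
  have h := lambdaMin_add_lambdaMin_le (hA.add hB) hB.neg
  rw [add_neg_cancel_right, lambdaMin_neg] at h
  linarith

end Weyl

theorem stmt_12_general {ι : Type*} [DecidableEq ι] {m : ℕ}
    (I : ι → Matrix (Fin m) (Fin m) ℝ) (hI : ∀ i, (I i).PosSemidef)
    (Ix : Matrix (Fin m) (Fin m) ℝ) (hIx : Ix.PosDef)
    (fE : Finset ι → ℝ)
    (hfE : ∀ S : Finset ι,
      fE S = lambdaMin (Ix + ∑ i ∈ S, I i) - lambdaMin Ix) :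
    ∀ (S T : Finset ι) (j : ι), S ⊆ T → j ∉ T →
      (fE (insert j T) - fE T) - (fE (insert j S) - fE S) ≤
        lambdaMax (I j) - lambdaMin (I j) := by
  intro S T j hST hjT
  have hA (W : Finset ι) : (Ix + ∑ i ∈ W, I i).IsHermitian :=
    (hIx.posSemidef.add (posSemidef_sum W fun i _ ↦ hI i)).isHermitian
  have gain_eq {W : Finset ι} (hjW : j ∉ W) : fE (insert j W) - fE W =
      lambdaMin ((Ix + ∑ i ∈ W, I i) + I j) - lambdaMin (Ix + ∑ i ∈ W, I i) := by
    rw [hfE, hfE, sum_insert hjW, add_comm (I j), ← add_assoc]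
    ring
  have gain_T := lambdaMin_add_le_lambdaMin_add_lambdaMax (hA T) (hI j).isHermitian
  have gain_S := lambdaMin_add_lambdaMin_le (hA S) (hI j).isHermitian
  rw [gain_eq hjT, gain_eq fun h ↦ hjT (hST h)]
  linarith

/-- Additive weak-submodularity bound for the E-optimality
criterion `f^E(S) = λ_min(I_x + Σ_{i∈S} I_i) − λ_min(I_x)`: for `S ⊆ T ⊂ X`
and `j ∉ T`, `f^E_j(T) − f^E_j(S) ≤ λ_max(I_j) − λ_min(I_j)`. -/
theorem stmt_12 {ι : Type*} [Fintype ι] [DecidableEq ι] {m : ℕ}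
    (I : ι → Matrix (Fin m) (Fin m) ℝ) (hI : ∀ i, (I i).PosSemidef)
    (Ix : Matrix (Fin m) (Fin m) ℝ) (hIx : Ix.PosDef)
    (fE : Finset ι → ℝ)
    (hfE : ∀ S : Finset ι,
      fE S = lambdaMin (Ix + ∑ i ∈ S, I i) - lambdaMin Ix) :
    ∀ (S T : Finset ι) (j : ι), S ⊆ T → j ∉ T →
      (fE (insert j T) - fE T) - (fE (insert j S) - fE S) ≤
        lambdaMax (I j) - lambdaMin (I j) :=
  stmt_12_general I hI Ix hIx fE hfE
end

section
/- Let X be a finite index set. For each i ∈ X, let x_i ∈ ℝ^m be nonzero and σ_i > 0; let P and I_x be m × m real symmetric positive definite matrices. In the rank-one quadratic setting write F̃_S = I_x + Σ_{i∈S} (1/σ_i²)·x_i x_i^⊤ P x_i x_i^⊤ and B_X = F̃_X^{-1} (the Van Trees bound for the full set), and define the A-optimality set function f^A(S) = Tr(I_x^{-1}) − Tr(F̃_S^{-1}) with marginal gains f^A_j(S) = f^A(S ∪ {j}) − f^A(S). Then for all S ⊆ T ⊂ X and j ∈ X \ T, f^A_j(T) ≤ γ_j · f^A_j(S), where γ_j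 = λ_max(I_x^{-1})² · (λ_max(σ_j² P) + 1) / ( λ_min(B_X)² · (λ_min(σ_j² P) + 1) ). -/
/-!
Since `x xᵀ P x xᵀ = (xᵀ P x) x xᵀ`, each `F̃_S` is `I_x` plus a nonnegative combination of the
rank-one matrices `x_i x_iᵀ`, so `S ↦ F̃_S` is monotone in the Loewner order. By Sherman–Morrison,
`f^A_j(S) = c ‖F̃_S⁻¹ u‖² / (1 + c uᵀ F̃_S⁻¹ u)` with `u = x_j` and `c = x_jᵀ P x_j / σ_j²`.
Writing `w = F̃⁻¹ u`, so that `uᵀ F̃⁻¹ u = wᵀ F̃ w`, the Rayleigh bounds `I_x ≥ λ_max(I_x⁻¹)⁻¹` and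
`F̃_X ≤ λ_min(B_X)⁻¹` give `‖F̃_T⁻¹ u‖² ≤ λ_max(I_x⁻¹) uᵀ F̃_T⁻¹ u` and
`λ_min(B_X) uᵀ F̃_S⁻¹ u ≤ ‖F̃_S⁻¹ u‖²`; together with `F̃_T⁻¹ ≤ F̃_S⁻¹` and the monotonicity of
`t ↦ c t / (1 + c t)` this yields `f^A_j(T) ≤ (λ_max(I_x⁻¹) / λ_min(B_X)) f^A_j(S) ≤ γ_j f^A_j(S)`.
-/

open Finset Matrix

open scoped MatrixOrder

namespace Matrix

lemma vecMulVec_mul_mul_vecMulVec {K n : Type*} [Field K] [Fintype n] (u : n → K)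
    (B : Matrix n n K) :
    vecMulVec u u * B * vecMulVec u u = (u ⬝ᵥ B *ᵥ u) • vecMulVec u u := by
  rw [vecMulVec_mul, vecMulVec_mul_vecMulVec, vecMulVec_smul, dotProduct_mulVec]

/-- The Sherman–Morrison formula. -/
lemma inv_add_smul_vecMulVec {K n : Type*} [Field K] [Fintype n] [DecidableEq n]
    {A : Matrix n n K} (hA : IsUnit A.det) (c : K) (u : n → K)
    (hu : 1 + c * (u ⬝ᵥ A⁻¹ *ᵥ u) ≠ 0) :
    (A + c • vecMulVec u u)⁻¹ =
      A⁻¹ - (c / (1 + c * (u ⬝ᵥ A⁻¹ *ᵥ u))) • (A⁻¹ * vecMulVec u u * A⁻¹) := by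
  have hAA : A * A⁻¹ = 1 := A.mul_nonsing_inv hA
  have hA1 : ∀ N, A * (A⁻¹ * N) = N := fun N => by rw [← Matrix.mul_assoc, hAA, Matrix.one_mul]
  have key : vecMulVec u u * (A⁻¹ * (vecMulVec u u * A⁻¹)) =
      (u ⬝ᵥ A⁻¹ *ᵥ u) • (vecMulVec u u * A⁻¹) := by
    rw [← Matrix.mul_assoc, ← Matrix.mul_assoc, vecMulVec_mul_mul_vecMulVec, smul_mul_assoc]
  apply inv_eq_right_inv
  simp only [add_mul, mul_sub, smul_mul_assoc, mul_smul_comm, smul_smul, Matrix.mul_assoc,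
    hAA, hA1, key]
  match_scalars
  · ring
  · field_simp
    ring

lemma dotProduct_mulVec_le_of_le {n : Type*} [Fintype n] {A B : Matrix n n ℝ} (h : A ≤ B)
    (v : n → ℝ) : v ⬝ᵥ A *ᵥ v ≤ v ⬝ᵥ B *ᵥ v := by
  have := (le_iff.mp h).dotProduct_mulVec_nonneg v
  simp only [star_trivial, sub_mulVec, dotProduct_sub] at this
  linarith

lemma PosDef.of_le {n : Type*} [Fintype n] {A B : Matrix n n ℝ} (hA : A.PosDef) (h : A ≤ B) :
    B.PosDef := by
  simpa using hA.add_posSemidef (le_iff.mp h)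

variable {n : Type*} [Fintype n] [DecidableEq n]

/-- The decrease of `tr A⁻¹` caused by adding `c u uᵀ` to `A`; see
`trace_inv_add_smul_vecMulVec`. -/
noncomputable def rankOneTraceGain (A : Matrix n n ℝ) (c : ℝ) (u : n → ℝ) : ℝ :=
  c * (A⁻¹ *ᵥ u ⬝ᵥ A⁻¹ *ᵥ u) / (1 + c * (u ⬝ᵥ A⁻¹ *ᵥ u))

lemma rankOneTraceGain_nonneg {A : Matrix n n ℝ} (hA : A.PosDef) {c : ℝ} (hc : 0 ≤ c)
    (u : n → ℝ) : 0 ≤ rankOneTraceGain A c u := by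
  have hb : 0 ≤ u ⬝ᵥ A⁻¹ *ᵥ u := by simpa using hA.inv.posSemidef.dotProduct_mulVec_nonneg u
  have ha : 0 ≤ A⁻¹ *ᵥ u ⬝ᵥ A⁻¹ *ᵥ u := by simpa using dotProduct_star_self_nonneg (A⁻¹ *ᵥ u)
  unfold rankOneTraceGain
  positivity

lemma trace_inv_add_smul_vecMulVec {A : Matrix n n ℝ} (hA : A.PosDef) {c : ℝ} (hc : 0 ≤ c)
    (u : n → ℝ) :
    (A + c • vecMulVec u u)⁻¹.trace = A⁻¹.trace - rankOneTraceGain A c u := by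
  have hb : 0 ≤ u ⬝ᵥ A⁻¹ *ᵥ u := by simpa using hA.inv.posSemidef.dotProduct_mulVec_nonneg u
  rw [inv_add_smul_vecMulVec ((isUnit_iff_isUnit_det A).mp hA.isUnit) c u (by positivity),
    trace_sub, trace_smul, mul_vecMulVec, vecMulVec_mul, trace_vecMulVec, smul_eq_mul,
    ← mulVec_transpose, (isHermitian_iff_isSymm.mp hA.inv.isHermitian).eq, rankOneTraceGain]
  ring

lemma dotProduct_algebraMap_mulVec (r : ℝ) (v : n → ℝ) :
    v ⬝ᵥ algebraMap ℝ (Matrix n n ℝ) r *ᵥ v = r * (v ⬝ᵥ v) := by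
  rw [Algebra.algebraMap_eq_smul_one, smul_mulVec, one_mulVec, dotProduct_smul, smul_eq_mul]

lemma inv_mulVec_dotProduct_mulVec_inv_mulVec {A : Matrix n n ℝ} (hA : IsUnit A.det)
    (u : n → ℝ) : A⁻¹ *ᵥ u ⬝ᵥ A *ᵥ (A⁻¹ *ᵥ u) = u ⬝ᵥ A⁻¹ *ᵥ u := by
  rw [mulVec_mulVec, mul_nonsing_inv A hA, one_mulVec, dotProduct_comm]

/-- Completing the square: `0 ≤ (y - A⁻¹ x) ⬝ A (y - A⁻¹ x)`. -/
lemma PosDef.two_dotProduct_sub_le {A : Matrix n n ℝ} (hA : A.PosDef) (x y : n → ℝ) :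
    2 * (y ⬝ᵥ x) - y ⬝ᵥ A *ᵥ y ≤ x ⬝ᵥ A⁻¹ *ᵥ x := by
  set w := A⁻¹ *ᵥ x
  have hAw : A *ᵥ w = x := by
    rw [mulVec_mulVec, A.mul_nonsing_inv ((isUnit_iff_isUnit_det A).mp hA.isUnit), one_mulVec]
  have hsymm : ∀ a b : n → ℝ, a ⬝ᵥ A *ᵥ b = b ⬝ᵥ A *ᵥ a := fun a b => by
    rw [dotProduct_mulVec, ← mulVec_transpose, (isHermitian_iff_isSymm.mp hA.isHermitian).eq,
      dotProduct_comm]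
  have h0 := hA.posSemidef.dotProduct_mulVec_nonneg (y - w)
  simp only [star_trivial, mulVec_sub, dotProduct_sub, sub_dotProduct, hsymm w y, hAw] at h0
  rw [dotProduct_comm w x] at h0
  linarith [dotProduct_comm x y]

lemma PosDef.inv_le_inv_of_le {A B : Matrix n n ℝ} (hA : A.PosDef) (h : A ≤ B) :
    B⁻¹ ≤ A⁻¹ := by
  have hB := hA.of_le h
  refine le_iff.mpr (.of_dotProduct_mulVec_nonneg (hA.inv.isHermitian.sub hB.inv.isHermitian)
    fun x => ?_)
  set w := B⁻¹ *ᵥ x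
  have hx : x ⬝ᵥ B⁻¹ *ᵥ x = 2 * (w ⬝ᵥ x) - w ⬝ᵥ B *ᵥ w := by
    rw [inv_mulVec_dotProduct_mulVec_inv_mulVec ((isUnit_iff_isUnit_det B).mp hB.isUnit),
      dotProduct_comm]
    ring
  have hsq := hA.two_dotProduct_sub_le x w
  simp only [star_trivial, sub_mulVec, dotProduct_sub]
  linarith [dotProduct_mulVec_le_of_le h w]

lemma inv_algebraMap {r : ℝ} (hr : r ≠ 0) :
    (algebraMap ℝ (Matrix n n ℝ) r)⁻¹ = algebraMap ℝ (Matrix n n ℝ) r⁻¹ :=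
  inv_eq_left_inv (by rw [← map_mul, inv_mul_cancel₀ hr, map_one])

lemma posDef_algebraMap {r : ℝ} (hr : 0 < r) : (algebraMap ℝ (Matrix n n ℝ) r).PosDef := by
  simpa [Algebra.algebraMap_eq_smul_one] using PosDef.one.smul hr

lemma PosDef.inv_inv {A : Matrix n n ℝ} (hA : A.PosDef) : A⁻¹⁻¹ = A :=
  nonsing_inv_nonsing_inv A ((isUnit_iff_isUnit_det A).mp hA.isUnit)

end Matrix

lemma monotone_add_sum_smul_vecMulVec {ι n : Type*} [Fintype n] (A : Matrix n n ℝ)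
    {c : ι → ℝ} (hc : ∀ i, 0 ≤ c i) (x : ι → n → ℝ) :
    Monotone fun S : Finset ι => A + ∑ i ∈ S, c i • vecMulVec (x i) (x i) := fun _ _ hST =>
  add_le_add le_rfl (sum_le_sum_of_subset_of_nonneg hST fun i _ _ => smul_nonneg (hc i)
    (nonneg_iff_posSemidef.mpr (by simpa using posSemidef_vecMulVec_self_star (x i))))

section Eigenvalues

variable {m : ℕ} {Q : Matrix (Fin m) (Fin m) ℝ}

lemma algebraMap_lambdaMin_le_s16 (hQ : Q.IsHermitian) : algebraMap ℝ _ (lambdaMin Q) ≤ Q := by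
  rw [le_iff, posSemidef_iff_isHermitian_and_spectrum_nonneg, ← spectrum.sub_singleton_eq]
  refine ⟨IsSelfAdjoint.sub hQ (.algebraMap _ (.all _)), ?_⟩
  rintro _ ⟨t, ht, _, rfl, rfl⟩
  exact sub_nonneg.mpr (csInf_le finite_real_spectrum.bddBelow ht)

lemma le_algebraMap_lambdaMax (hQ : Q.IsHermitian) : Q ≤ algebraMap ℝ _ (lambdaMax Q) := by
  rw [le_iff, posSemidef_iff_isHermitian_and_spectrum_nonneg, ← spectrum.singleton_sub_eq]
  refine ⟨(IsSelfAdjoint.algebraMap _ (.all _)).sub hQ, ?_⟩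
  rintro _ ⟨_, rfl, t, ht, rfl⟩
  exact sub_nonneg.mpr (le_csSup finite_real_spectrum.bddAbove ht)

lemma lambdaMin_le_lambdaMax_of_le {A B : Matrix (Fin m) (Fin m) ℝ} (hA : A.IsHermitian)
    (hB : B.IsHermitian) (h : A ≤ B) (hm : 0 < m) : lambdaMin A ≤ lambdaMax B := by
  have h := ((algebraMap_lambdaMin_le_s16 hA).trans h).trans (le_algebraMap_lambdaMax hB)
  have hv := dotProduct_mulVec_le_of_le h (Pi.single ⟨0, hm⟩ 1)
  simpa only [dotProduct_algebraMap_mulVec, dotProduct_single, Pi.single_eq_same, mul_one]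
    using hv

lemma lambdaMin_pos (hQ : Q.PosDef) (hm : 0 < m) : 0 < lambdaMin Q := by
  have hmem : lambdaMin Q ∈ spectrum ℝ Q :=
    Set.Nonempty.csInf_mem ⟨_, hQ.isHermitian.eigenvalues_mem_spectrum_real ⟨0, hm⟩⟩
      finite_real_spectrum
  obtain ⟨i, hi⟩ := hQ.isHermitian.spectrum_real_eq_range_eigenvalues ▸ hmem
  exact hi ▸ hQ.eigenvalues_pos i

lemma lambdaMin_nonneg (hQ : Q.PosSemidef) : 0 ≤ lambdaMin Q :=
  Real.sInf_nonneg fun _ ht => (posSemidef_iff_isHermitian_and_spectrum_nonneg.mp hQ).2 ht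

end Eigenvalues

lemma dotProduct_inv_mulVec_self_le {m : ℕ} {I B : Matrix (Fin m) (Fin m) ℝ} (hI : I.PosDef)
    (hIB : I ≤ B) (u : Fin m → ℝ) (hm : 0 < m) :
    B⁻¹ *ᵥ u ⬝ᵥ B⁻¹ *ᵥ u ≤ lambdaMax I⁻¹ * (u ⬝ᵥ B⁻¹ *ᵥ u) := by
  have hlM : 0 < lambdaMax I⁻¹ := (lambdaMin_pos hI.inv hm).trans_le
    (lambdaMin_le_lambdaMax_of_le hI.inv.isHermitian hI.inv.isHermitian le_rfl hm)
  have hI' := hI.inv.inv_le_inv_of_le (le_algebraMap_lambdaMax hI.inv.isHermitian)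
  rw [hI.inv_inv, inv_algebraMap hlM.ne'] at hI'
  have hq := dotProduct_mulVec_le_of_le (hI'.trans hIB) (B⁻¹ *ᵥ u)
  rw [dotProduct_algebraMap_mulVec, inv_mulVec_dotProduct_mulVec_inv_mulVec
    ((isUnit_iff_isUnit_det B).mp (hI.of_le hIB).isUnit)] at hq
  rwa [inv_mul_le_iff₀ hlM] at hq

lemma lambdaMin_inv_mul_le_dotProduct {m : ℕ} {A C : Matrix (Fin m) (Fin m) ℝ} (hA : A.PosDef)
    (hAC : A ≤ C) (u : Fin m → ℝ) (hm : 0 < m) :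
    lambdaMin C⁻¹ * (u ⬝ᵥ A⁻¹ *ᵥ u) ≤ A⁻¹ *ᵥ u ⬝ᵥ A⁻¹ *ᵥ u := by
  have hC := hA.of_le hAC
  have hlm : 0 < lambdaMin C⁻¹ := lambdaMin_pos hC.inv hm
  have hC' := (posDef_algebraMap hlm).inv_le_inv_of_le (algebraMap_lambdaMin_le_s16 hC.inv.isHermitian)
  rw [hC.inv_inv, inv_algebraMap hlm.ne'] at hC'
  have hq := dotProduct_mulVec_le_of_le (hAC.trans hC') (A⁻¹ *ᵥ u)
  rw [dotProduct_algebraMap_mulVec, inv_mulVec_dotProduct_mulVec_inv_mulVec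
    ((isUnit_iff_isUnit_det A).mp hA.isUnit)] at hq
  rwa [← div_eq_inv_mul, le_div_iff₀' hlm] at hq

lemma rankOneTraceGain_le {m : ℕ} {I A B C : Matrix (Fin m) (Fin m) ℝ} (hI : I.PosDef)
    (hIA : I ≤ A) (hAB : A ≤ B) (hAC : A ≤ C) {c : ℝ} (hc : 0 ≤ c) (u : Fin m → ℝ)
    (hm : 0 < m) :
    rankOneTraceGain B c u ≤ lambdaMax I⁻¹ / lambdaMin C⁻¹ * rankOneTraceGain A c u := by
  have hA := hI.of_le hIA
  set lM := lambdaMax I⁻¹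
  set lm := lambdaMin C⁻¹
  have hlm : 0 < lm := lambdaMin_pos (hA.of_le hAC).inv hm
  have hlM : lm ≤ lM := lambdaMin_le_lambdaMax_of_le (hA.of_le hAC).inv.isHermitian
    hI.inv.isHermitian (hI.inv_le_inv_of_le (hIA.trans hAC)) hm
  have hupper := dotProduct_inv_mulVec_self_le hI (hIA.trans hAB) u hm
  have hlower := lambdaMin_inv_mul_le_dotProduct hA hAC u hm
  have hanti : u ⬝ᵥ B⁻¹ *ᵥ u ≤ u ⬝ᵥ A⁻¹ *ᵥ u :=
    dotProduct_mulVec_le_of_le (hA.inv_le_inv_of_le hAB) u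
  have hbB : 0 ≤ u ⬝ᵥ B⁻¹ *ᵥ u := by
    simpa using (hA.of_le hAB).inv.posSemidef.dotProduct_mulVec_nonneg u
  have hbA : 0 ≤ u ⬝ᵥ A⁻¹ *ᵥ u := hbB.trans hanti
  unfold rankOneTraceGain
  calc c * (B⁻¹ *ᵥ u ⬝ᵥ B⁻¹ *ᵥ u) / (1 + c * (u ⬝ᵥ B⁻¹ *ᵥ u))
      ≤ c * (lM * (u ⬝ᵥ B⁻¹ *ᵥ u)) / (1 + c * (u ⬝ᵥ B⁻¹ *ᵥ u)) := by gcongr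
    _ ≤ c * (lM * (u ⬝ᵥ A⁻¹ *ᵥ u)) / (1 + c * (u ⬝ᵥ A⁻¹ *ᵥ u)) := by
      rw [div_le_div_iff₀ (by positivity) (by positivity)]
      nlinarith [mul_le_mul_of_nonneg_left hanti (mul_nonneg hc (hlm.le.trans hlM))]
    _ = lM / lm * (c * (lm * (u ⬝ᵥ A⁻¹ *ᵥ u)) / (1 + c * (u ⬝ᵥ A⁻¹ *ᵥ u))) := by
      field_simp
    _ ≤ lM / lm * (c * (A⁻¹ *ᵥ u ⬝ᵥ A⁻¹ *ᵥ u) / (1 + c * (u ⬝ᵥ A⁻¹ *ᵥ u))) := by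
      have : 0 ≤ lM / lm := div_nonneg (hlm.le.trans hlM) hlm.le
      gcongr

lemma div_le_sq_mul_add_one_div {a b p q : ℝ} (hb : 0 < b) (hba : b ≤ a) (hp : 0 ≤ p)
    (hpq : p ≤ q) : a / b ≤ a ^ 2 * (q + 1) / (b ^ 2 * (p + 1)) := by
  rw [div_le_div_iff₀ hb (by positivity)]
  nlinarith [mul_le_mul hba (add_le_add_left hpq 1) (by positivity) (hb.le.trans hba),
    mul_pos hb (hb.trans_le hba)]

theorem stmt_16_general {ι : Type*} [Fintype ι] [DecidableEq ι] {m : ℕ}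
    (x : ι → Fin m → ℝ)
    (σ : ι → ℝ)
    (P : Matrix (Fin m) (Fin m) ℝ) (hP : P.PosDef)
    (Ix : Matrix (Fin m) (Fin m) ℝ) (hIx : Ix.PosDef)
    (Ftil : Finset ι → Matrix (Fin m) (Fin m) ℝ)
    (hFtil : ∀ S : Finset ι, Ftil S = Ix + ∑ i ∈ S, (1 / (σ i) ^ 2) •
      (vecMulVec (x i) (x i) * P * vecMulVec (x i) (x i)))
    (BX : Matrix (Fin m) (Fin m) ℝ) (hBX : BX = (Ftil Finset.univ)⁻¹)
    (fA : Finset ι → ℝ)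
    (hfA : ∀ S : Finset ι, fA S = Ix⁻¹.trace - (Ftil S)⁻¹.trace)
    (γ : ι → ℝ)
    (hγ : ∀ j, γ j =
      lambdaMax Ix⁻¹ ^ 2 * (lambdaMax ((σ j) ^ 2 • P) + 1) /
        (lambdaMin BX ^ 2 * (lambdaMin ((σ j) ^ 2 • P) + 1))) :
    ∀ (S T : Finset ι) (j : ι), S ⊆ T → j ∉ T →
      fA (insert j T) - fA T ≤ γ j * (fA (insert j S) - fA S) := by
  intro S T j hST hjT
  rcases Nat.eq_zero_or_pos m with rfl | hm
  -- for `m = 0` the eigenvalues are junk, but every trace, hence every `fA S`, is `0`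
  · simp [hfA]
  set c : ι → ℝ := fun i => (x i ⬝ᵥ P *ᵥ x i) / σ i ^ 2
  have hc : ∀ i, 0 ≤ c i := fun i =>
    div_nonneg (by simpa using hP.posSemidef.dotProduct_mulVec_nonneg (x i)) (sq_nonneg _)
  have hF : Ftil = fun W => Ix + ∑ i ∈ W, c i • vecMulVec (x i) (x i) := by
    ext1 W
    simp only [hFtil, vecMulVec_mul_mul_vecMulVec, smul_smul, c, one_div, inv_mul_eq_div]
  have hmono : Monotone Ftil := hF ▸ monotone_add_sum_smul_vecMulVec Ix hc x
  have hIF : ∀ W, Ix ≤ Ftil W := fun W => by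
    simpa [hF] using hmono (empty_subset W)
  have hgain : ∀ W, j ∉ W → fA (insert j W) - fA W = rankOneTraceGain (Ftil W) (c j) (x j) :=
    fun W hjW => by
      have hins : Ftil (insert j W) = Ftil W + c j • vecMulVec (x j) (x j) := by
        simp only [hF, sum_insert hjW]
        abel
      rw [hfA, hfA, hins, trace_inv_add_smul_vecMulVec (hIx.of_le (hIF W)) (hc j)]
      ring
  rw [hgain T hjT, hgain S fun h => hjT (hST h), hγ]
  have hBXpos : BX.PosDef := hBX ▸ (hIx.of_le (hIF univ)).inv
  have hBXle : BX ≤ Ix⁻¹ := hBX ▸ hIx.inv_le_inv_of_le (hIF univ)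
  have hσP : ((σ j) ^ 2 • P).PosSemidef := hP.posSemidef.smul (sq_nonneg _)
  have hratio := div_le_sq_mul_add_one_div (lambdaMin_pos hBXpos hm)
    (lambdaMin_le_lambdaMax_of_le hBXpos.isHermitian hIx.inv.isHermitian hBXle hm)
    (lambdaMin_nonneg hσP) (lambdaMin_le_lambdaMax_of_le hσP.isHermitian hσP.isHermitian le_rfl hm)
  refine (rankOneTraceGain_le hIx (hIF S) (hmono hST) (hmono (subset_univ S)) (hc j) (x j)
    hm).trans ?_
  rw [← hBX]
  exact mul_le_mul_of_nonneg_right hratio (rankOneTraceGain_nonneg (hIx.of_le (hIF S)) (hc j) _)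

/-- Multiplicative weak-submodularity bound for the A-optimality
criterion in the rank-one quadratic setting: for `S ⊆ T ⊂ X` and `j ∉ T`,
`f^A_j(T) ≤ γ_j · f^A_j(S)`, where
`γ_j = λ_max(I_x⁻¹)²(λ_max(σ_j² P)+1)/(λ_min(B_X)²(λ_min(σ_j² P)+1))` and
`B_X = F̃_X⁻¹` is the Van Trees bound for the full set. -/
theorem stmt_16 {ι : Type*} [Fintype ι] [DecidableEq ι] {m : ℕ}
    (x : ι → Fin m → ℝ) (hx : ∀ i, x i ≠ 0)
    (σ : ι → ℝ) (hσ : ∀ i, 0 < σ i)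
    (P : Matrix (Fin m) (Fin m) ℝ) (hP : P.PosDef)
    (Ix : Matrix (Fin m) (Fin m) ℝ) (hIx : Ix.PosDef)
    (Ftil : Finset ι → Matrix (Fin m) (Fin m) ℝ)
    (hFtil : ∀ S : Finset ι, Ftil S = Ix + ∑ i ∈ S, (1 / (σ i) ^ 2) •
      (vecMulVec (x i) (x i) * P * vecMulVec (x i) (x i)))
    (BX : Matrix (Fin m) (Fin m) ℝ) (hBX : BX = (Ftil Finset.univ)⁻¹)
    (fA : Finset ι → ℝ)
    (hfA : ∀ S : Finset ι, fA S = Ix⁻¹.trace - (Ftil S)⁻¹.trace)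
    (γ : ι → ℝ)
    (hγ : ∀ j, γ j =
      lambdaMax Ix⁻¹ ^ 2 * (lambdaMax ((σ j) ^ 2 • P) + 1) /
        (lambdaMin BX ^ 2 * (lambdaMin ((σ j) ^ 2 • P) + 1))) :
    ∀ (S T : Finset ι) (j : ι), S ⊆ T → j ∉ T →
      fA (insert j T) - fA T ≤ γ j * (fA (insert j S) - fA S) :=
  stmt_16_general x σ P hP Ix hIx Ftil hFtil BX hBX fA hfA γ hγ
end
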